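/- Let A be a unital C*-algebra and x_1,...,x_{n+j} (j >= 0) self-adjoint elements of A with C*(x_1,...,x_{n+j}) an MF algebra. If K_top^(2)(x_1,...,x_n : x_1,...,x_{n+j}) = 0, then K_top^(2)(x_1,...,x_{n-1} : x_1,...,x_{n+j}) = 0. -/

import Mathlib

noncomputable section

open Filter Set
open scoped BigOperators ComplexOrder

namespace OrbitDim

/-- `k × k` complex matrices. -/
abbrev Mat (k : ℕ) := Matrix (Fin k) (Fin k) ℂ

/-- The operator norm of a complex matrix, i.e. the norm of the operator it induces
on the euclidean space `ℂ^k`. -/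
def opNorm {k : ℕ} (M : Mat k) : ℝ := ‖Matrix.toEuclideanCLM (𝕜 := ℂ) M‖

/-- The square of the normalized Hilbert–Schmidt norm `‖M‖₂² = τ_k(M*M)`. -/
def hsNormSq {k : ℕ} (M : Mat k) : ℝ := (k : ℝ)⁻¹ * ∑ s, ∑ t, ‖M s t‖ ^ 2

/-- The normalized Hilbert–Schmidt norm `‖M‖₂ = τ_k(M*M)^{1/2}`. -/
def hsNorm {k : ℕ} (M : Mat k) : ℝ := Real.sqrt (hsNormSq M)

/-- `‖·‖₂` of a tuple of matrices. -/
def tupleHS {ι : Type*} [Fintype ι] {k : ℕ} (T : ι → Mat k) : ℝ :=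
  Real.sqrt (∑ i, hsNormSq (T i))

/-- The normalized trace `τ_k = (1/k) Tr`. -/
def normalizedTrace {k : ℕ} (M : Mat k) : ℂ := (k : ℂ)⁻¹ * Matrix.trace M

/-- Noncommutative *-polynomials in variables indexed by `ι`: elements of the free
`ℂ`-algebra on `ι ⊕ ι`, the second copy of `ι` standing for the starred variables. -/
abbrev StarPoly (ι : Type*) := FreeAlgebra ℂ (ι ⊕ ι)

/-- Evaluation of a *-polynomial at a tuple `x`, the second copy of the variables being
evaluated at `star (x i)`. -/
def evalPoly {ι : Type*} {B : Type*} [Ring B] [Algebra ℂ B] [Star B]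
    (P : StarPoly ι) (x : ι → B) : B :=
  FreeAlgebra.lift ℂ (Sum.elim x fun i => star (x i)) P

/-- The `ω`-orbit-`‖·‖₂`-ball centered at a tuple `B` of `k × k` matrices. -/
def orbitBall {ι : Type*} [Fintype ι] {k : ℕ} (B : ι → Mat k) (ω : ℝ) :
    Set (ι → Mat k) :=
  {T | ∃ W : Mat k, W ∈ unitary (Mat k) ∧
    tupleHS (fun i => T i - W * B i * star W) < ω}

/-- The covering number `o₂(S, ω)`: the minimal number of `ω`-orbit-`‖·‖₂`-balls with
centers in `S` needed to cover `S` (`⊤` if there is no finite such cover). -/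
def o2 {ι : Type*} [Fintype ι] {k : ℕ} (S : Set (ι → Mat k)) (ω : ℝ) : ℕ∞ :=
  sInf {n : ℕ∞ | ∃ F : Finset (ι → Mat k),
    ↑F ⊆ S ∧ S ⊆ (⋃ B ∈ F, orbitBall B ω) ∧ n = (F.card : ℕ∞)}

/-- Logarithm of an extended natural number, valued in the extended reals. -/
def elog (n : ℕ∞) : EReal :=
  WithTop.recTopCoe ⊤ (fun m : ℕ => ((Real.log m : ℝ) : EReal)) n

/-- The convention `∞ ⬝ 0 = 0` and `∞ ⬝ t = ∞` for `t > 0`. -/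
def infMul (x : EReal) : EReal := if x = 0 then 0 else ⊤

variable {A : Type*} [CStarAlgebra A]

/-- Voiculescu's norm-microstate space `Γ_R^{top}(x₁,…,xₙ; k, ε, P₁,…,P_r)`:
self-adjoint `k × k` matrices `T i` of operator norm at most `R` such that
`| ‖P_j(T)‖ - ‖P_j(x)‖ | ≤ ε` for each `j`. -/
def Gamma {ι : Type*} [Fintype ι] (x : ι → A) (R : ℝ) (k : ℕ) (ε : ℝ)
    {r : ℕ} (P : Fin r → StarPoly ι) : Set (ι → Mat k) :=
  {T | (∀ i, IsSelfAdjoint (T i)) ∧ (∀ i, opNorm (T i) ≤ R) ∧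
    ∀ j, |opNorm (evalPoly (P j) T) - ‖evalPoly (P j) x‖| ≤ ε}

/-- Norm-microstate space of `x` in the presence of `y`: the projection onto the first
coordinates of the microstate space of the joint tuple. -/
def GammaRel {ι κ : Type*} [Fintype ι] [Fintype κ] (x : ι → A) (y : κ → A)
    (R : ℝ) (k : ℕ) (ε : ℝ) {r : ℕ} (P : Fin r → StarPoly (ι ⊕ κ)) :
    Set (ι → Mat k) :=
  (fun T : ι ⊕ κ → Mat k => T ∘ Sum.inl) '' Gamma (Sum.elim x y) R k ε P

/-- Topological orbit dimension `K_top^{(2)}(x : y)` of a (self-adjoint) tuple `x`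
in the presence of `y`. -/
def Ktop2sa {ι κ : Type*} [Fintype ι] [Fintype κ] (x : ι → A) (y : κ → A) : EReal :=
  ⨆ (ω : ℝ) (_ : 0 < ω) (R : ℝ) (_ : 0 < R),
    ⨅ (ε : ℝ) (_ : 0 < ε) (r : ℕ) (P : Fin r → StarPoly (ι ⊕ κ)),
      limsup (fun k : ℕ =>
        elog (o2 (GammaRel x y R k ε P) ω) * ((((k : ℝ) ^ 2)⁻¹ : ℝ) : EReal)) atTop

/-- The tuple of real and imaginary parts of a tuple of elements. -/
def reim {ι : Type*} (x : ι → A) : ι ⊕ ι → A :=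
  Sum.elim (fun i => (2⁻¹ : ℂ) • (x i + star (x i)))
    (fun i => ((2 * Complex.I)⁻¹ : ℂ) • (x i - star (x i)))

/-- Topological orbit dimension `K_top^{(2)}(x : y)` for arbitrary tuples, obtained by
applying the self-adjoint version to the real and imaginary parts. -/
def Ktop2 {ι κ : Type*} [Fintype ι] [Fintype κ] (x : ι → A) (y : κ → A) : EReal :=
  Ktop2sa (reim x) (reim y)

/-- `K_top^{(3)}(G)` for a subset `G` of a C*-algebra. -/
def Ktop3 (G : Set A) : EReal :=
  ⨆ (n : ℕ) (x : Fin n → A) (_ : ∀ i, x i ∈ G),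
    ⨅ (t : ℕ) (y : Fin t → A) (_ : ∀ j, y j ∈ G), infMul (Ktop2 x y)

/-- The C*-subalgebra generated by a subset: the topological closure of the star
subalgebra generated by it. -/
def cstar (s : Set A) : StarSubalgebra ℂ A :=
  (StarAlgebra.adjoin ℂ s).topologicalClosure

/-- The tuple `x` admits matricial microstates: there are matrices realizing the norms of
all *-polynomials in `x` asymptotically; i.e. `C*(x)` is an MF algebra. -/
def IsMFTuple {ι : Type*} [Fintype ι] (x : ι → A) : Prop :=
  ∃ (m : ℕ → ℕ) (T : ∀ k, ι → Mat (m k)), (∀ k, 0 < m k) ∧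
    ∀ Q : StarPoly ι,
      Tendsto (fun k => opNorm (evalPoly Q (T k))) atTop (nhds ‖evalPoly Q x‖)

/-- A unital C*-algebra is MF if it admits a unital isometric embedding into
`∏ₖ M_{m_k}(ℂ) / ∑ₖ M_{m_k}(ℂ)`, expressed here by an asymptotically multiplicative,
asymptotically star-linear, asymptotically unital family of maps into matrices which is
isometric with respect to the quotient (limsup) norm. -/
def IsMF (A : Type*) [CStarAlgebra A] : Prop :=
  ∃ (m : ℕ → ℕ) (Φ : A → ∀ k, Mat (m k)),
    (∀ k, 0 < m k) ∧
    (∀ a b : A, Tendsto (fun k => opNorm (Φ (a + b) k - Φ a k - Φ b k)) atTop (nhds 0)) ∧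
    (∀ a b : A, Tendsto (fun k => opNorm (Φ (a * b) k - Φ a k * Φ b k)) atTop (nhds 0)) ∧
    (∀ (c : ℂ) (a : A), Tendsto (fun k => opNorm (Φ (c • a) k - c • Φ a k)) atTop (nhds 0)) ∧
    (∀ a : A, Tendsto (fun k => opNorm (Φ (star a) k - star (Φ a k))) atTop (nhds 0)) ∧
    Tendsto (fun k => opNorm (Φ 1 k - 1)) atTop (nhds 0) ∧
    ∀ a : A, limsup (fun k => opNorm (Φ a k)) atTop = ‖a‖

/-- A tracial state on a unital C*-algebra: a positive unital linear functional which is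
tracial. -/
def IsTracialState (τ : A → ℂ) : Prop :=
  (∀ a b : A, τ (a + b) = τ a + τ b) ∧ (∀ (c : ℂ) (a : A), τ (c • a) = c * τ a) ∧
  τ 1 = 1 ∧ (∀ a : A, 0 ≤ τ (star a * a)) ∧ ∀ a b : A, τ (a * b) = τ (b * a)

/-- An MF-trace (with respect to the generating tuple `x`): a tracial state which is a
limit of normalized matrix traces along microstates realizing the norms of all
*-polynomials in `x`. -/
def IsMFTrace {ι : Type*} [Fintype ι] (x : ι → A) (τ : A → ℂ) : Prop :=
  IsTracialState τ ∧
  ∃ (m : ℕ → ℕ) (T : ∀ k, ι → Mat (m k)), (∀ k, 0 < m k) ∧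
    (∀ Q : StarPoly ι,
      Tendsto (fun k => opNorm (evalPoly Q (T k))) atTop (nhds ‖evalPoly Q x‖)) ∧
    (∀ Q : StarPoly ι,
      Tendsto (fun k => normalizedTrace (evalPoly Q (T k))) atTop (nhds (τ (evalPoly Q x))))

/-- The product of the letters of a word. -/
def wordProd {M : Type*} [Monoid M] {ι : Type*} {q : ℕ} (x : ι → M) (w : Fin q → ι) : M :=
  (List.ofFn fun j => x (w j)).prod

/-- Tracial microstate space `Γ_R(x; m, k, ε; τ)`: self-adjoint matrices of norm at most
`R` whose normalized trace on every word of length at most `m` is `ε`-close to `τ` on the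
corresponding word in `x`. -/
def GammaTr {ι : Type*} [Fintype ι] (x : ι → A) (τ : A → ℂ) (R : ℝ) (m k : ℕ) (ε : ℝ) :
    Set (ι → Mat k) :=
  {T | (∀ i, IsSelfAdjoint (T i)) ∧ (∀ i, opNorm (T i) ≤ R) ∧
    ∀ q : ℕ, 1 ≤ q → q ≤ m → ∀ w : Fin q → ι,
      ‖normalizedTrace (wordProd T w) - τ (wordProd x w)‖ < ε}

/-- Tracial microstate space of `x` in the presence of `y`. -/
def GammaTrRel {ι κ : Type*} [Fintype ι] [Fintype κ] (x : ι → A) (y : κ → A) (τ : A → ℂ)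
    (R : ℝ) (m k : ℕ) (ε : ℝ) : Set (ι → Mat k) :=
  (fun T : ι ⊕ κ → Mat k => T ∘ Sum.inl) '' GammaTr (Sum.elim x y) τ R m k ε

/-- The modified free orbit dimension `K₂^{(2)}(x : y; τ)` of a (self-adjoint) tuple. -/
def K22sa {ι κ : Type*} [Fintype ι] [Fintype κ] (x : ι → A) (y : κ → A) (τ : A → ℂ) :
    EReal :=
  limsup (fun ω : ℝ =>
      ⨆ (R : ℝ) (_ : 0 < R), ⨅ (m : ℕ) (ε : ℝ) (_ : 0 < ε),
        limsup (fun k : ℕ =>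
          elog (o2 (GammaTrRel x y τ R m k ε) ω) * ((((k : ℝ) ^ 2)⁻¹ : ℝ) : EReal)) atTop)
    (nhdsWithin (0 : ℝ) (Ioi 0))

/-- The modified free orbit dimension for arbitrary tuples, via real and imaginary
parts. -/
def K22 {ι κ : Type*} [Fintype ι] [Fintype κ] (x : ι → A) (y : κ → A) (τ : A → ℂ) :
    EReal :=
  K22sa (reim x) (reim y) τ

/-- `K₃^{(3)}(G : τ)`. -/
def K33 (G : Set A) (τ : A → ℂ) : EReal :=
  ⨆ (n : ℕ) (x : Fin n → A) (_ : ∀ i, x i ∈ G),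
    ⨅ (t : ℕ) (y : Fin t → A) (_ : ∀ j, y j ∈ G), infMul (K22 x y τ)

/-- A (possibly non-unital) *-algebra has no finite-dimensional representations if the
only *-homomorphism from it into a matrix algebra is zero. -/
def HasNoFinDimRep (B : Type*) [NonUnitalNonAssocSemiring B] [Module ℂ B] [Star B] : Prop :=
  ∀ (k : ℕ) (φ : B →⋆ₙₐ[ℂ] Mat k) (b : B), φ b = 0

end OrbitDim

/-! Dropping a variable `xₙ` that is still present in the ambient tuple cannot increase the
topological orbit dimension. After renaming the test polynomials so that `xₙ` is read off the
ambient tuple, every microstate of `(x₁,…,x_{n-1})` is the restriction of a microstate of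
`(x₁,…,xₙ)`. Restriction to fewer coordinates and unitary conjugation do not increase `‖·‖₂`,
so the orbit balls form a pseudometric family and a cover of the larger microstate space by
`ω`-balls yields a cover of the smaller one by as many `2ω`-balls centred in it. Hence the
orbit dimension of the smaller tuple is at most that of the larger one, which is `0`; it is
nonnegative since `o₂ ≥ 0` and `log 0 = 0`. -/

namespace OrbitDim

variable {A : Type*} [CStarAlgebra A]

lemma elog_nonneg (n : ℕ∞) : 0 ≤ elog n := by
  cases n with
  | top => exact le_top
  | coe m => exact EReal.coe_nonneg.mpr (Real.log_natCast_nonneg m)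

lemma elog_coe (m : ℕ) : elog m = (Real.log m : EReal) := rfl

lemma elog_mono {m n : ℕ∞} (h : m ≤ n) : elog m ≤ elog n := by
  cases n with
  | top => exact le_top
  | coe n =>
    lift m to ℕ using ne_top_of_le_ne_top (ENat.natCast_ne_top n) h
    have hmn : m ≤ n := by exact_mod_cast h
    rw [elog_coe, elog_coe, EReal.coe_le_coe_iff]
    rcases m.eq_zero_or_pos with rfl | hm
    · simpa using Real.log_natCast_nonneg n
    · exact Real.log_le_log (by exact_mod_cast hm) (by exact_mod_cast hmn)

lemma hsNormSq_nonneg {k : ℕ} (M : Mat k) : 0 ≤ hsNormSq M := by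
  unfold hsNormSq
  positivity

lemma hsNormSq_eq_re_trace {k : ℕ} (M : Mat k) :
    hsNormSq M = (k : ℝ)⁻¹ * (Matrix.trace (star M * M)).re := by
  rw [hsNormSq, Matrix.trace, Complex.re_sum, Finset.sum_comm]
  congr 1
  refine Finset.sum_congr rfl fun s _ => ?_
  rw [Matrix.diag, Matrix.mul_apply, Complex.re_sum]
  refine Finset.sum_congr rfl fun t _ => ?_
  rw [Matrix.star_apply, Complex.star_def, mul_comm, Complex.mul_conj, Complex.normSq_eq_norm_sq]
  norm_cast

lemma hsNormSq_unitary_conj {k : ℕ} {W : Mat k} (hW : W ∈ unitary (Mat k)) (M : Mat k) :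
    hsNormSq (W * M * star W) = hsNormSq M := by
  have hWW (X : Mat k) : star W * (W * X) = X := by
    rw [← mul_assoc, Unitary.star_mul_self_of_mem hW, one_mul]
  have hconj : star (W * M * star W) * (W * M * star W) = W * (star M * M) * star W := by
    simp only [star_mul, star_star, mul_assoc, hWW]
  rw [hsNormSq_eq_re_trace, hsNormSq_eq_re_trace, hconj, Matrix.trace_mul_cycle, ← mul_assoc,
    Unitary.star_mul_self_of_mem hW, one_mul]

lemma tupleHS_eq_sqrt_inv_mul_norm {ι : Type*} [Fintype ι] {k : ℕ} (T : ι → Mat k) :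
    tupleHS T = √(k : ℝ)⁻¹ *
      ‖(WithLp.toLp 2 fun p : ι × Fin k × Fin k => T p.1 p.2.1 p.2.2 :
        EuclideanSpace ℂ (ι × Fin k × Fin k))‖ := by
  rw [EuclideanSpace.norm_eq, ← Real.sqrt_mul (by positivity), tupleHS]
  congr 1
  simp only [hsNormSq, Finset.mul_sum, Fintype.sum_prod_type]

lemma tupleHS_add_le {ι : Type*} [Fintype ι] {k : ℕ} (X Y : ι → Mat k) :
    tupleHS (X + Y) ≤ tupleHS X + tupleHS Y := by
  simp only [tupleHS_eq_sqrt_inv_mul_norm, ← mul_add]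
  exact mul_le_mul_of_nonneg_left
    (norm_add_le (WithLp.toLp 2 fun p : ι × Fin k × Fin k => X p.1 p.2.1 p.2.2)
      (WithLp.toLp 2 fun p => Y p.1 p.2.1 p.2.2)) (Real.sqrt_nonneg _)

lemma tupleHS_neg {ι : Type*} [Fintype ι] {k : ℕ} (T : ι → Mat k) :
    tupleHS (-T) = tupleHS T := by
  simp only [tupleHS, hsNormSq, Pi.neg_apply, Matrix.neg_apply, norm_neg]

lemma tupleHS_unitary_conj {ι : Type*} [Fintype ι] {k : ℕ} {W : Mat k}
    (hW : W ∈ unitary (Mat k)) (T : ι → Mat k) :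
    tupleHS (fun i => W * T i * star W) = tupleHS T := by
  simp only [tupleHS, hsNormSq_unitary_conj hW]

lemma tupleHS_comp_le {ι₁ ι₂ : Type*} [Fintype ι₁] [Fintype ι₂] {k : ℕ}
    {e : ι₁ → ι₂} (he : Function.Injective e) (X : ι₂ → Mat k) :
    tupleHS (X ∘ e) ≤ tupleHS X := by
  classical
  refine Real.sqrt_le_sqrt ?_
  calc ∑ i, hsNormSq (X (e i)) = ∑ i ∈ Finset.univ.image e, hsNormSq (X i) :=
        (Finset.sum_image (f := fun i => hsNormSq (X i)) fun _ _ _ _ h => he h).symm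
    _ ≤ ∑ i, hsNormSq (X i) :=
        Finset.sum_le_sum_of_subset_of_nonneg (Finset.subset_univ _)
          fun i _ _ => hsNormSq_nonneg (X i)

lemma orbitBall_trans {ι : Type*} [Fintype ι] {k : ℕ} {c p T : ι → Mat k} {ω₁ ω₂ : ℝ}
    (hT : T ∈ orbitBall c ω₁) (hp : p ∈ orbitBall c ω₂) : T ∈ orbitBall p (ω₁ + ω₂) := by
  obtain ⟨W₁, hW₁, hd₁⟩ := hT
  obtain ⟨W₂, hW₂, hd₂⟩ := hp
  have hW : W₁ * star W₂ ∈ unitary (Mat k) := mul_mem hW₁ (Unitary.star_mem hW₂)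
  refine ⟨W₁ * star W₂, hW, ?_⟩
  have hWW (X : Mat k) : star W₂ * (W₂ * X) = X := by
    rw [← mul_assoc, Unitary.star_mul_self_of_mem hW₂, one_mul]
  have hsplit : (fun i => T i - W₁ * star W₂ * p i * star (W₁ * star W₂)) =
      (fun i => T i - W₁ * c i * star W₁) +
        -fun i => W₁ * star W₂ * (p i - W₂ * c i * star W₂) * star (W₁ * star W₂) := by
    funext i
    simp only [Pi.add_apply, Pi.neg_apply, star_mul, star_star, mul_sub, sub_mul, mul_assoc, hWW]
    abel
  calc tupleHS _ ≤ tupleHS (fun i => T i - W₁ * c i * star W₁) +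
        tupleHS (fun i => p i - W₂ * c i * star W₂) := by
        rw [hsplit]
        refine (tupleHS_add_le _ _).trans_eq ?_
        rw [tupleHS_neg, tupleHS_unitary_conj hW]
    _ < ω₁ + ω₂ := add_lt_add hd₁ hd₂

open scoped Classical in
/-- Each ball of the cover of `S` that meets `S'` is replaced by the ball of twice the radius
centred at a point of `S'` in it. -/
lemma o2_le_of_subset_image_comp {ι₁ ι₂ : Type*} [Fintype ι₁] [Fintype ι₂] {k : ℕ}
    {e : ι₁ → ι₂} (he : Function.Injective e) {S : Set (ι₂ → Mat k)} {S' : Set (ι₁ → Mat k)}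
    (hS : S' ⊆ (· ∘ e) '' S) (ω : ℝ) :
    o2 S' (ω + ω) ≤ o2 S ω := by
  refine sInf_le_sInf_of_isCoinitialFor ?_
  rintro _ ⟨F, -, hcov, rfl⟩
  let meets (B : ι₂ → Mat k) : Prop := (orbitBall (B ∘ e) ω ∩ S').Nonempty
  let center (B : ι₂ → Mat k) : ι₁ → Mat k := if h : meets B then h.choose else 0
  have hcenter {B} (hB : meets B) : center B ∈ orbitBall (B ∘ e) ω ∩ S' := by
    simpa only [center, dif_pos hB] using hB.choose_spec
  let F' := (F.filter meets).image center
  refine ⟨F'.card, ⟨F', ?_, ?_, rfl⟩, ?_⟩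
  · intro _ hp
    obtain ⟨B, hB, rfl⟩ := Finset.mem_image.mp hp
    exact (hcenter (Finset.mem_filter.mp hB).2).2
  · intro T' hT'
    obtain ⟨T, hT, rfl⟩ := hS hT'
    obtain ⟨B, hBF, W, hW, hd⟩ := Set.mem_iUnion₂.mp (hcov hT)
    have hball : T ∘ e ∈ orbitBall (B ∘ e) ω :=
      ⟨W, hW, (tupleHS_comp_le he (fun i => T i - W * B i * star W)).trans_lt hd⟩
    have hB : meets B := ⟨T ∘ e, hball, hT'⟩
    exact Set.mem_iUnion₂.mpr ⟨center B, Finset.mem_image_of_mem center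
      (Finset.mem_filter.mpr ⟨hBF, hB⟩), orbitBall_trans hball (hcenter hB).1⟩
  · exact_mod_cast Finset.card_image_le.trans (Finset.card_filter_le _ _)

def StarPoly.rename {ι₁ ι₂ : Type*} (f : ι₁ → ι₂) : StarPoly ι₁ →ₐ[ℂ] StarPoly ι₂ :=
  FreeAlgebra.lift ℂ fun v => FreeAlgebra.ι ℂ (Sum.map f f v)

lemma evalPoly_rename {ι₁ ι₂ B : Type*} [Ring B] [Algebra ℂ B] [Star B]
    (f : ι₁ → ι₂) (Q : StarPoly ι₁) (x : ι₂ → B) :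
    evalPoly (StarPoly.rename f Q) x = evalPoly Q (x ∘ f) := by
  have hcomp : (FreeAlgebra.lift ℂ (Sum.elim x fun i => star (x i))).comp (StarPoly.rename f) =
      FreeAlgebra.lift ℂ (Sum.elim (x ∘ f) fun i => star ((x ∘ f) i)) := by
    refine FreeAlgebra.hom_ext (funext fun v => ?_)
    cases v <;> simp [StarPoly.rename]
  exact DFunLike.congr_fun hcomp Q

lemma GammaRel_rename_subset_image_comp {ι₁ ι₂ κ : Type*} [Fintype ι₁] [Fintype ι₂] [Fintype κ]
    {x : ι₂ → A} {y : κ → A} {e : ι₁ → ι₂} {g : ι₂ → ι₁ ⊕ κ}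
    (hge : ∀ i, g (e i) = Sum.inl i) (hxg : ∀ i, Sum.elim (x ∘ e) y (g i) = x i)
    (R : ℝ) (k : ℕ) (ε : ℝ) {r : ℕ} (P : Fin r → StarPoly (ι₂ ⊕ κ)) :
    GammaRel (x ∘ e) y R k ε (fun j => StarPoly.rename (Sum.elim g Sum.inr) (P j)) ⊆
      (· ∘ e) '' GammaRel x y R k ε P := by
  set f : ι₂ ⊕ κ → ι₁ ⊕ κ := Sum.elim g Sum.inr
  have hxf : Sum.elim (x ∘ e) y ∘ f = Sum.elim x y := by
    funext v
    cases v with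
    | inl i => exact hxg i
    | inr l => rfl
  rintro _ ⟨U, ⟨hsa, hnorm, hpoly⟩, rfl⟩
  refine ⟨U ∘ f ∘ Sum.inl,
    ⟨U ∘ f, ⟨fun v => hsa (f v), fun v => hnorm (f v), fun j => ?_⟩, rfl⟩,
    funext fun i => congrArg U (hge i)⟩
  simpa only [evalPoly_rename, hxf] using hpoly j

lemma Ktop2sa_nonneg {ι κ : Type*} [Fintype ι] [Fintype κ] (x : ι → A) (y : κ → A) :
    0 ≤ Ktop2sa x y := by
  refine le_trans ?_ (le_iSup₂_of_le 1 one_pos (le_iSup₂_of_le 1 one_pos le_rfl))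
  refine le_iInf₂ fun ε _ => le_iInf₂ fun r P => ?_
  refine le_limsup_of_frequently_le' (Frequently.of_forall fun k => ?_)
  exact mul_nonneg (elog_nonneg _) (EReal.coe_nonneg.mpr (by positivity))

lemma Ktop2sa_comp_le {ι₁ ι₂ κ : Type*} [Fintype ι₁] [Fintype ι₂] [Fintype κ]
    {x : ι₂ → A} {y : κ → A} {e : ι₁ → ι₂} (he : Function.Injective e) {g : ι₂ → ι₁ ⊕ κ}
    (hge : ∀ i, g (e i) = Sum.inl i) (hxg : ∀ i, Sum.elim (x ∘ e) y (g i) = x i) :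
    Ktop2sa (x ∘ e) y ≤ Ktop2sa x y := by
  refine iSup₂_le fun ω hω => iSup₂_le fun R hR => ?_
  refine le_iSup₂_of_le (ω / 2) (half_pos hω) (le_iSup₂_of_le R hR ?_)
  refine le_iInf₂ fun ε hε => le_iInf₂ fun r P => ?_
  refine iInf₂_le_of_le ε hε <| iInf₂_le_of_le r
    (fun j => StarPoly.rename (Sum.elim g Sum.inr) (P j)) <|
    limsup_le_limsup (Eventually.of_forall fun k => ?_)
  refine mul_le_mul_of_nonneg_right (elog_mono ?_) (EReal.coe_nonneg.mpr (by positivity))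
  simpa only [add_halves] using o2_le_of_subset_image_comp he
    (GammaRel_rename_subset_image_comp hge hxg R k ε P) (ω / 2)

end OrbitDim

open OrbitDim Set

/-- If `C*(x₁,…,x_{n+j})` is MF and
`K_top^{(2)}(x₁,…,xₙ : x₁,…,x_{n+j}) = 0`, then
`K_top^{(2)}(x₁,…,x_{n-1} : x₁,…,x_{n+j}) = 0`. -/
theorem stmt1 {A : Type*} [CStarAlgebra A] (n j : ℕ)
    (x : Fin (n + j) → A)
    (h : Ktop2sa (fun i : Fin n => x ⟨i.1, lt_of_lt_of_le i.isLt (Nat.le_add_right n j)⟩) x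
        = 0) :
    Ktop2sa (fun i : Fin (n - 1) => x ⟨i.1, lt_of_lt_of_le i.isLt (by omega)⟩) x = 0 := by
  set xn : Fin n → A := fun i => x (Fin.castLE (Nat.le_add_right n j) i)
  -- the last variable of `xn` is read off the ambient tuple `x`
  let g : Fin n → Fin (n - 1) ⊕ Fin (n + j) := fun i =>
    if hi : i.1 < n - 1 then Sum.inl ⟨i, hi⟩ else Sum.inr (Fin.castLE (Nat.le_add_right n j) i)
  have hge (i : Fin (n - 1)) : g (Fin.castLE (Nat.sub_le n 1) i) = Sum.inl i := dif_pos i.isLt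
  have hxg (i : Fin n) : Sum.elim (xn ∘ Fin.castLE (Nat.sub_le n 1)) x (g i) = xn i := by
    simp only [g]
    split_ifs <;> rfl
  exact le_antisymm ((Ktop2sa_comp_le (Fin.castLE_injective _) hge hxg).trans h.le)
    (Ktop2sa_nonneg _ _)
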